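/- For the all-ones n×n matrix C (complete graph with self-loops), the 2n×2n symplectic evolution matrix M = [[I, C],[C, I+C²]] has exactly one eigenvalue greater than 1, namely λ = (2+n²)/2 + (n/2)√(n²+4), and the eigenvalue 1 has multiplicity 2n−2. -/

import Mathlib

open Matrix Polynomial

/-!
Writing `M(C)` for `fromBlocks 1 C C (1 + C * C)`, a factorization `C = A * B` gives
`M(A * B) - 1 = diag(A, A) * [[0, B], [B, B * A * B]]`, and multiplying the two factors in the
other order gives `M(B * A) - 1`. As `P * Q` and `Q * P` have the same characteristic polynomial
up to a power of `X`, the spectrum of `M(A * B)` is that of `M(B * A)` together with copies of 1.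
The all-ones matrix is `1 * 1ᵀ` with `1ᵀ * 1 = n`, which reduces everything to the `2 × 2` matrix
`M(n)` of trace `2 + n²` and determinant 1; the product of its two eigenvalues is 1, so exactly
one of them exceeds 1.
-/

namespace Matrix

variable {R : Type*} [CommRing R] {m k : Type*} [Fintype m] [DecidableEq m] [Fintype k]
  [DecidableEq k]

theorem charpoly_one_add (N : Matrix m m R) : (1 + N).charpoly = N.charpoly.comp (X - 1) := by
  simpa [sub_eq_add_neg, add_comm] using charpoly_sub_scalar N (-1)

theorem charpoly_one_add_mul_comm_of_le (A : Matrix m k R) (B : Matrix k m R)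
    (h : Fintype.card k ≤ Fintype.card m) :
    (1 + A * B).charpoly = (X - 1) ^ (Fintype.card m - Fintype.card k) * (1 + B * A).charpoly := by
  rw [charpoly_one_add, charpoly_one_add, charpoly_mul_comm_of_le A B h, mul_comp, X_pow_comp]

def evolutionMatrix (C : Matrix m m R) : Matrix (m ⊕ m) (m ⊕ m) R :=
  fromBlocks 1 C C (1 + C * C)

theorem det_evolutionMatrix (C : Matrix m m R) : (evolutionMatrix C).det = 1 := by
  simp [evolutionMatrix, det_fromBlocks_one₁₁]

omit [DecidableEq k] in
theorem evolutionMatrix_mul (A : Matrix m k R) (B : Matrix k m R) :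
    evolutionMatrix (A * B) = 1 + fromBlocks A 0 0 A * fromBlocks 0 B B (B * A * B) := by
  simp [evolutionMatrix, fromBlocks_multiply, ← fromBlocks_one, fromBlocks_add, Matrix.mul_assoc]

omit [DecidableEq m] in
theorem evolutionMatrix_mul_comm (A : Matrix m k R) (B : Matrix k m R) :
    evolutionMatrix (B * A) = 1 + fromBlocks 0 B B (B * A * B) * fromBlocks A 0 0 A := by
  simp [evolutionMatrix, fromBlocks_multiply, ← fromBlocks_one, fromBlocks_add, Matrix.mul_assoc]

theorem charpoly_evolutionMatrix_mul_of_le (A : Matrix m k R) (B : Matrix k m R)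
    (h : Fintype.card k ≤ Fintype.card m) :
    (evolutionMatrix (A * B)).charpoly =
      (X - 1) ^ (2 * Fintype.card m - 2 * Fintype.card k) * (evolutionMatrix (B * A)).charpoly := by
  rw [evolutionMatrix_mul, evolutionMatrix_mul_comm,
    charpoly_one_add_mul_comm_of_le _ _ (by simpa [two_mul] using Nat.add_le_add h h)]
  simp [two_mul]

theorem charpoly_evolutionMatrix_unit [Nontrivial R] (s : R) :
    (evolutionMatrix (of fun _ _ : Unit => s)).charpoly = X ^ 2 - C (2 + s ^ 2) * X + 1 := by
  rw [charpoly_of_card_eq_two (M := evolutionMatrix _) (by simp), det_evolutionMatrix]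
  simp [evolutionMatrix, trace, Fintype.sum_sum_type, mul_apply, map_ofNat]
  ring

theorem charpoly_evolutionMatrix_allOnes [Nontrivial R] [Nonempty m] :
    (evolutionMatrix (of fun _ _ : m => (1 : R))).charpoly =
      (X - 1) ^ (2 * Fintype.card m - 2) * (X ^ 2 - C (2 + (Fintype.card m : R) ^ 2) * X + 1) := by
  have factor : (of fun _ _ : m => (1 : R)) =
      replicateCol Unit (fun _ : m => (1 : R)) * replicateRow Unit (fun _ : m => (1 : R)) := by
    ext; simp [mul_apply]
  have swap : replicateRow Unit (fun _ : m => (1 : R)) * replicateCol Unit (fun _ : m => (1 : R)) =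
      of fun _ _ => (Fintype.card m : R) := by
    ext; simp [mul_apply]
  have card_le : Fintype.card Unit ≤ Fintype.card m := by
    rw [Fintype.card_unit]; exact Fintype.card_pos
  rw [factor, charpoly_evolutionMatrix_mul_of_le _ _ card_le, swap,
    charpoly_evolutionMatrix_unit, Fintype.card_unit, mul_one]

end Matrix

theorem eq_of_sq_sub_mul_add_one_eq_zero {K : Type*} [Field K] [LinearOrder K]
    [IsStrictOrderedRing K] {b x y : K} (hx : x ^ 2 - b * x + 1 = 0) (hy : y ^ 2 - b * y + 1 = 0)
    (hx1 : 1 < x) (hy1 : 1 < y) : x = y := by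
  have : (x - y) * (x * y - 1) = 0 := by linear_combination y * hx - x * hy
  rcases mul_eq_zero.mp this with h | h
  · linarith
  · nlinarith

theorem all_ones_evolution_spectrum {n : ℕ} (hn : 1 ≤ n)
    (C : Matrix (Fin n) (Fin n) ℝ) (hC : ∀ i j, C i j = 1)
    (M : Matrix (Fin n ⊕ Fin n) (Fin n ⊕ Fin n) ℝ)
    (hM : M = Matrix.fromBlocks 1 C C (1 + C * C)) :
    let lam0 : ℝ := (2 + (n : ℝ) ^ 2) / 2 + ((n : ℝ) / 2) * Real.sqrt ((n : ℝ) ^ 2 + 4)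
    M.charpoly = (X - 1) ^ (2 * n - 2)
        * (X ^ 2 - Polynomial.C (2 + (n : ℝ) ^ 2) * X + 1) ∧
    M.charpoly.IsRoot lam0 ∧
    lam0 > 1 ∧
    (∀ mu : ℝ, mu > 1 → M.charpoly.IsRoot mu → mu = lam0) := by
  intro lam0
  have : Nonempty (Fin n) := ⟨⟨0, hn⟩⟩
  have hCM : C = of fun _ _ => 1 := ext hC
  have charpoly_eq : M.charpoly = (X - 1) ^ (2 * n - 2)
      * (X ^ 2 - Polynomial.C (2 + (n : ℝ) ^ 2) * X + 1) := by
    have h := charpoly_evolutionMatrix_allOnes (R := ℝ) (m := Fin n)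
    rw [Fintype.card_fin] at h
    rwa [hM, hCM]
  have isRoot_iff {x : ℝ} (hx : 1 < x) :
      M.charpoly.IsRoot x ↔ x ^ 2 - (2 + n ^ 2) * x + 1 = 0 := by
    simp [charpoly_eq, sub_eq_zero, hx.ne']
  have lam0_root : lam0 ^ 2 - (2 + n ^ 2) * lam0 + 1 = 0 := by
    linear_combination ((n : ℝ) ^ 2 / 4) * Real.sq_sqrt (by positivity : (0 : ℝ) ≤ n ^ 2 + 4)
  have lam0_gt : lam0 > 1 := by
    have : (1 : ℝ) ≤ n := by exact_mod_cast hn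
    have := Real.sqrt_nonneg ((n : ℝ) ^ 2 + 4)
    dsimp only [lam0]
    nlinarith
  refine ⟨charpoly_eq, (isRoot_iff lam0_gt).2 lam0_root, lam0_gt, fun mu hmu hroot => ?_⟩
  exact eq_of_sq_sub_mul_add_one_eq_zero ((isRoot_iff hmu).1 hroot) lam0_root hmu lam0_gt
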